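/- Let n ≥ 4, let d and a(1), ..., a(n−1) be integers with 0 < a(i) < d for every i and Σ_{i=1}^{n−1} a(i) < d, and suppose moreover that a(j) = 1 for some j and that the greatest common divisor of the remaining a(i) (i ≠ j) is 1. Let K be the convex hull in ℝ^n of {0, e_1, ..., e_{n−1}, (a(1), ..., a(n−1), d)^T}. Then K is an empty lattice simplex, i.e., K ∩ ℤ^n = {0, e_1, ..., e_{n−1}, (a(1), ..., a(n−1), d)^T}. -/

import Mathlib

/-!
Write `m` for the last coordinate, `d = a m`, and `x = ∑_{k ≠ m} c k • e k + μ • a` for a point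
of the simplex. At a lattice point the scaled barycentric coordinates `d μ = x m` and
`d c k = d x k - a k x m` are integers, nonnegative, with `x m + ∑ d c k ≤ d`. If `x m = 0` this
forces `x = 0` or `x = e k`. Otherwise `a j = 1` gives `d x j ≥ x m > 0`, so `x j ≥ 1` and `d c j`
alone uses up the bound `d - x m`: all other `c k` vanish, i.e. `d ∣ a k x m` for `k ≠ j`. The gcd
condition then gives `d ∣ x m ≤ d`, so `x m = d` and `x = a`.
-/

open Pointwise

def latticePoints (n : ℕ) : Set (Fin n → ℝ) := {x | ∀ i, ∃ z : ℤ, x i = (z : ℝ)}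

open Finset

namespace ApexSimplex

variable {ι R : Type*}

section Vertices

variable [DecidableEq ι] [CommRing R] (m : ι) (v : ι → R)

def vertex (k : ι) : ι → R := if k = m then v else Pi.single k 1

def vertices : Set (ι → R) := {0} ∪ Set.range (vertex m v)

theorem range_vertex :
    Set.range (vertex m v) = {x | ∃ k, k ≠ m ∧ x = Pi.single k 1} ∪ {v} := by
  ext x
  simp only [Set.mem_range, Set.mem_union, Set.mem_ofPred_eq, Set.mem_singleton_iff, vertex]
  constructor
  · rintro ⟨k, rfl⟩
    by_cases hk : k = m
    · exact Or.inr (if_pos hk)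
    · exact Or.inl ⟨k, hk, if_neg hk⟩
  · rintro (⟨k, hk, rfl⟩ | rfl)
    · exact ⟨k, if_neg hk⟩
    · exact ⟨m, if_pos rfl⟩

theorem sum_smul_vertex [Fintype ι] (c : ι → R) :
    ∑ k, c k • vertex m v k = Function.update c m 0 + c m • v := by
  ext i
  rw [← add_sum_erase _ _ (mem_univ m)]
  simp only [vertex, if_true, Finset.sum_apply, Pi.smul_apply, smul_eq_mul, Pi.add_apply,
    Function.update_apply]
  rw [sum_congr rfl fun k hk => by rw [if_neg (ne_of_mem_erase hk)]]
  simp only [Pi.single_apply, mul_ite, mul_one, mul_zero, sum_ite_eq, mem_erase, mem_univ,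
    and_true]
  by_cases hi : i = m <;> simp [hi, add_comm]

theorem intCast_vertices (a : ι → ℤ) :
    vertices m (fun i => (a i : R)) = (fun (z : ι → ℤ) i => (z i : R)) '' vertices m a := by
  simp only [vertices, Set.image_union, Set.image_singleton, ← Set.range_comp]
  congr 2
  · ext; simp
  · ext k i
    by_cases hk : k = m <;> by_cases hi : i = k <;> simp [vertex, hk, hi]

end Vertices

section Independence

variable {𝕜 : Type*} [Field 𝕜] [DecidableEq ι] [Fintype ι] {m : ι} {v : ι → 𝕜}

theorem linearIndependent_vertex (hv : v m ≠ 0) : LinearIndependent 𝕜 (vertex m v) := by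
  rw [Fintype.linearIndependent_iff]
  intro c hc
  rw [sum_smul_vertex] at hc
  have hcm : c m = 0 := by
    simpa [hv] using congrFun hc m
  intro i
  by_cases hi : i = m
  · rwa [hi]
  · simpa [hcm, hi] using congrFun hc i

theorem affineIndependent_vertices (hv : v m ≠ 0) :
    AffineIndependent 𝕜 ((↑) : vertices m v → ι → 𝕜) := by
  have hli := linearIndependent_vertex hv
  have hne : ∀ x ∈ Set.range (vertex m v), x ≠ 0 := by
    rintro _ ⟨k, rfl⟩ h0
    exact hli.ne_zero k h0
  have hset : vertices m v = {(0 : ι → 𝕜)} ∪ (· +ᵥ (0 : ι → 𝕜)) '' Set.range (vertex m v) := by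
    simp [vertices]
  rw [hset]
  exact (linearIndependent_set_iff_affineIndependent_vadd_union_singleton 𝕜 hne 0).1
    ((linearIndepOn_id_range_iff hli.injective).2 hli)

end Independence

section Region

variable [Fintype ι]

/-- For `x = ∑_{k ≠ m} c k • e k + μ • v` one has `v m * μ = x m` and
`v m * c k = v m * x k - v k * x m`; these are the facet inequalities `μ ≥ 0`, `c k ≥ 0`,
`μ + ∑ c k ≤ 1` of the simplex, multiplied by `v m` (the `k = m` conditions are trivial). -/
def barycentricRegion [CommRing R] [LE R] (m : ι) (v : ι → R) : Set (ι → R) :=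
  {x | 0 ≤ x m ∧ (∀ k, v k * x m ≤ v m * x k) ∧ x m + ∑ k, (v m * x k - v k * x m) ≤ v m}

theorem vertices_subset_barycentricRegion [DecidableEq ι] [CommRing R] [PartialOrder R]
    [IsOrderedRing R] {m : ι} {v : ι → R} (hv : 0 ≤ v m) :
    vertices m v ⊆ barycentricRegion m v := by
  rintro x (hx | ⟨k, rfl⟩)
  · rw [Set.mem_singleton_iff.1 hx]
    simpa [barycentricRegion] using hv
  · by_cases hk : k = m
    · subst hk
      simp [barycentricRegion, vertex, hv, mul_comm]
    · simp [barycentricRegion, vertex, hk, Ne.symm hk, Pi.single_apply, apply_ite, hv]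

theorem convex_barycentricRegion {𝕜 : Type*} [Field 𝕜] [LinearOrder 𝕜] [IsStrictOrderedRing 𝕜]
    (m : ι) (v : ι → 𝕜) : Convex 𝕜 (barycentricRegion m v) := by
  rintro x ⟨hx0, hx1, hx2⟩ y ⟨hy0, hy1, hy2⟩ a b ha hb hab
  simp only [barycentricRegion, Set.mem_ofPred_eq, Pi.add_apply, Pi.smul_apply, smul_eq_mul]
  refine ⟨by positivity, fun k => ?_, ?_⟩
  · nlinarith [mul_le_mul_of_nonneg_left (hx1 k) ha, mul_le_mul_of_nonneg_left (hy1 k) hb]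
  · have hsum : ∑ k, (v m * (a * x k + b * y k) - v k * (a * x m + b * y m)) =
        a * ∑ k, (v m * x k - v k * x m) + b * ∑ k, (v m * y k - v k * y m) := by
      rw [mul_sum, mul_sum, ← sum_add_distrib]
      exact sum_congr rfl fun k _ => by ring
    calc _ = a * (x m + ∑ k, (v m * x k - v k * x m)) +
          b * (y m + ∑ k, (v m * y k - v k * y m)) := by rw [hsum]; ring
      _ ≤ a * v m + b * v m := by gcongr
      _ = v m := by rw [← add_mul, hab, one_mul]

theorem intCast_mem_barycentricRegion_iff {R : Type*} [CommRing R] [LinearOrder R]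
    [IsStrictOrderedRing R] {m : ι} {v z : ι → ℤ} :
    (fun i => (z i : R)) ∈ barycentricRegion m (fun i => (v i : R)) ↔
      z ∈ barycentricRegion m v := by
  simp only [barycentricRegion, Set.mem_ofPred_eq]
  norm_cast

end Region

section Lattice

variable [Fintype ι] {m : ι} {a z : ι → ℤ}

theorem eq_zero_or_exists_eq_single_of_sum_le_one [DecidableEq ι] (h0 : ∀ k, 0 ≤ z k)
    (h1 : ∑ k, z k ≤ 1) : z = 0 ∨ ∃ k, z = Pi.single k 1 := by
  obtain rfl | hne := eq_or_ne z 0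
  · exact Or.inl rfl
  obtain ⟨k, hk⟩ := Function.ne_iff.1 hne
  have hsplit := add_sum_erase univ z (mem_univ k)
  have hrest : 0 ≤ ∑ i ∈ univ.erase k, z i := sum_nonneg fun i _ => h0 i
  have hzk : z k = 1 := by
    have := h0 k
    simp only [Pi.zero_apply] at hk
    omega
  have hzero := (sum_eq_zero_iff_of_nonneg fun i _ => h0 i).1
    (by omega : ∑ i ∈ univ.erase k, z i = 0)
  refine Or.inr ⟨k, funext fun i => ?_⟩
  by_cases hi : i = k
  · simp [hi, hzk]
  · simp [hi, hzero i (mem_erase.2 ⟨hi, mem_univ i⟩)]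

namespace barycentricRegion

theorem coord_le (hz : z ∈ barycentricRegion m a) (k : ι) :
    a m * z k - a k * z m ≤ a m - z m := by
  obtain ⟨-, hc, hsum⟩ := hz
  have := single_le_sum (f := fun k => a m * z k - a k * z m) (fun i _ => sub_nonneg.2 (hc i))
    (mem_univ k)
  linarith

theorem apply_le (hz : z ∈ barycentricRegion m a) : z m ≤ a m := by
  linarith [coord_le hz m]

theorem eq_of_apply_eq (hz : z ∈ barycentricRegion m a) (hm : z m = a m) (ha : a m ≠ 0) :
    z = a := by
  funext k
  have h1 := hz.2.1 k
  have h2 := coord_le hz k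
  rw [hm] at h1 h2
  exact mul_left_cancel₀ ha (by linarith)

theorem eq_zero_or_exists_eq_single [DecidableEq ι] (hz : z ∈ barycentricRegion m a)
    (ha : 0 < a m) (hm : z m = 0) : z = 0 ∨ ∃ k, k ≠ m ∧ z = Pi.single k 1 := by
  obtain ⟨-, hc, hsum⟩ := hz
  simp only [hm, mul_zero, sub_zero, zero_add, ← mul_sum] at hc hsum
  rcases eq_zero_or_exists_eq_single_of_sum_le_one
    (fun k => nonneg_of_mul_nonneg_right (hc k) ha)
    (le_of_mul_le_mul_left (by simpa using hsum) ha) with h | ⟨k, rfl⟩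
  · exact Or.inl h
  · refine Or.inr ⟨k, fun hk => ?_, rfl⟩
    simp [hk] at hm

theorem dvd_apply [DecidableEq ι] (hz : z ∈ barycentricRegion m a) {j : ι} (hj : a j = 1)
    {s : Finset ι} (hjs : j ∉ s) (hgcd : s.gcd a = 1) (hpos : 0 < z m) : a m ∣ z m := by
  have ham : 0 < a m := hpos.trans_le (apply_le hz)
  obtain ⟨-, hc, hsum⟩ := hz
  have hcj := hc j
  rw [hj, one_mul] at hcj
  have hzj : 1 ≤ z j := by
    by_contra h
    nlinarith
  -- `a m * z j - z m` alone already reaches the bound `a m - z m`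
  have hrest : ∑ k ∈ univ.erase j, (a m * z k - a k * z m) = 0 := by
    have hsplit := add_sum_erase univ (fun k => a m * z k - a k * z m) (mem_univ j)
    have hnonneg : 0 ≤ ∑ k ∈ univ.erase j, (a m * z k - a k * z m) :=
      sum_nonneg fun k _ => sub_nonneg.2 (hc k)
    simp only [hj, one_mul] at hsplit
    nlinarith
  have hdvd : ∀ k ∈ s, a m ∣ z m * a k := by
    intro k hk
    have := (sum_eq_zero_iff_of_nonneg fun k _ => sub_nonneg.2 (hc k)).1 hrest k
      (mem_erase.2 ⟨ne_of_mem_of_not_mem hk hjs, mem_univ k⟩)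
    exact ⟨z k, by linarith⟩
  have := dvd_gcd hdvd
  rwa [Finset.gcd_mul_left, hgcd, mul_one, Int.normalize_of_nonneg hpos.le] at this

end barycentricRegion

theorem mem_vertices_of_mem_barycentricRegion [DecidableEq ι] (ha : 0 < a m) {j : ι}
    (hj : a j = 1) {s : Finset ι} (hjs : j ∉ s) (hgcd : s.gcd a = 1)
    (hz : z ∈ barycentricRegion m a) : z ∈ vertices m a := by
  rcases hz.1.eq_or_lt with h0 | hpos
  · rcases barycentricRegion.eq_zero_or_exists_eq_single hz ha h0.symm with rfl | ⟨k, hk, rfl⟩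
    · exact Or.inl rfl
    · exact Or.inr ⟨k, if_neg hk⟩
  · have hle := Int.le_of_dvd hpos (barycentricRegion.dvd_apply hz hj hjs hgcd hpos)
    have hza := barycentricRegion.eq_of_apply_eq hz
      (le_antisymm (barycentricRegion.apply_le hz) hle) ha.ne'
    exact Or.inr ⟨m, by rw [vertex, if_pos rfl, hza]⟩

theorem convexHull_vertices_inter_range_intCast [DecidableEq ι] {𝕜 : Type*} [Field 𝕜]
    [LinearOrder 𝕜] [IsStrictOrderedRing 𝕜] (ha : 0 < a m) {j : ι} (hj : a j = 1)
    {s : Finset ι} (hjs : j ∉ s) (hgcd : s.gcd a = 1) :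
    convexHull 𝕜 (vertices m (fun i => (a i : 𝕜))) ∩
        Set.range (fun (z : ι → ℤ) i => (z i : 𝕜)) = vertices m (fun i => (a i : 𝕜)) := by
  refine subset_antisymm ?_ fun x hx => ⟨subset_convexHull 𝕜 _ hx, ?_⟩
  · rintro _ ⟨hx, z, rfl⟩
    have hmem := convexHull_min (vertices_subset_barycentricRegion (by exact_mod_cast ha.le))
      (convex_barycentricRegion m _) hx
    rw [intCast_mem_barycentricRegion_iff] at hmem
    rw [intCast_vertices]
    exact Set.mem_image_of_mem _ (mem_vertices_of_mem_barycentricRegion ha hj hjs hgcd hmem)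
  · rw [intCast_vertices] at hx
    obtain ⟨z, -, rfl⟩ := hx
    exact ⟨z, rfl⟩

end Lattice

end ApexSimplex

open ApexSimplex

theorem latticePoints_eq_range (n : ℕ) :
    latticePoints n = Set.range (fun (z : Fin n → ℤ) i => (z i : ℝ)) := by
  ext x
  simp only [latticePoints, Set.mem_ofPred_eq, Set.mem_range, funext_iff, Classical.skolem]
  simp_rw [eq_comm]

/-- Let `n ≥ 4`, let `d` and the `a i` (`i < n - 1`) be integers with `0 < a i < d` and
`∑_{i<n-1} a i < d`, with the last coordinate of `a` equal to `d`; suppose moreover that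
`a j = 1` for some `j < n - 1` and that the gcd of the remaining `a i` (`i < n - 1`,
`i ≠ j`) is `1`.  Then the convex hull `K` of `{0, e_1, …, e_{n-1}, a}` is an empty
lattice simplex: its only lattice points are its vertices. -/
theorem example4_empty (n : ℕ) (hn : 4 ≤ n) (d : ℤ) (a : Fin n → ℤ)
    (ha : ∀ i : Fin n, (i : ℕ) < n - 1 → 0 < a i ∧ a i < d)
    (hlast : a ⟨n - 1, by omega⟩ = d)
    (j : Fin n) (hj : (j : ℕ) < n - 1) (hj1 : a j = 1)
    (hgcd : (Finset.univ.filter (fun i : Fin n => (i : ℕ) < n - 1 ∧ i ≠ j)).gcd a = 1)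
    (S : Set (Fin n → ℝ))
    (hS : S = {0} ∪ {x | ∃ i : Fin n, (i : ℕ) < n - 1 ∧ x = Pi.single i 1} ∪
      {fun i => (a i : ℝ)})
    (K : Set (Fin n → ℝ)) (hK : K = convexHull ℝ S) :
    AffineIndependent ℝ ((↑) : S → (Fin n → ℝ)) ∧ K ∩ latticePoints n = S := by
  set m : Fin n := ⟨n - 1, by omega⟩
  have hm : ∀ i : Fin n, (i : ℕ) < n - 1 ↔ i ≠ m := fun i => by
    simp only [Ne, Fin.ext_iff, m]
    omega
  have hd : 0 < a m := hlast ▸ (ha j hj).1.trans (ha j hj).2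
  have hjs : j ∉ Finset.univ.filter (fun i : Fin n => (i : ℕ) < n - 1 ∧ i ≠ j) := by simp
  have hSv : S = vertices m (fun i => (a i : ℝ)) := by
    simp only [hS, hm, vertices, range_vertex, Set.union_assoc]
  subst hSv hK
  refine ⟨affineIndependent_vertices (by exact_mod_cast hd.ne'), ?_⟩
  rw [latticePoints_eq_range]
  exact convexHull_vertices_inter_range_intCast hd hj1 hjs hgcd
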